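/- arXiv:2207.11014 — 2 statements merged into one kernel-verified Lean document; each statement's English description precedes it below -/
import Mathlib

section
/- Let N ≥ 1 and 1 ≤ K ≤ N be integers, let w ∈ ℝ^N be a nonzero vector with nonnegative entries, and let H ⊆ {1,…,N} be a top-K set for w. Let ψ be the unit vector in the Euclidean space indexed by {1,…,N} × {0,1} defined by ψ(i,0) = √(w_i/Z), ψ(i,1) = 0 for i ∈ H, ψ(i,1) = √((m − w_i)/Z) for i ∉ H, where m = min_{i ∈ H} w_i and Z = (N−K)·m + ∑_{i ∈ H} w_i. Let φ be the vector defined by φ(i,0) = √(w_i/W) and φ(i,1) = 0, where W = ∑_{i=1}^N w_i. Then the inner product ⟨ψ, φ⟩ equals √(W/Z). -/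
open scoped RealInnerProductSpace

/-! Only the `0` sector contributes, and there
`√(w i / Z) * √(w i / W) = w i / (√Z * √W)`; summing gives `W / (√Z * √W) = √W / √Z = √(W / Z)`. -/

theorem EuclideanSpace.inner_eq_sum_of_apply_one_eq_zero {ι : Type*} [Fintype ι]
    (ψ φ : EuclideanSpace ℝ (ι × Fin 2)) (hφ : ∀ i, φ (i, 1) = 0) :
    ⟪ψ, φ⟫ = ∑ i, ψ (i, 0) * φ (i, 0) := by
  simp [PiLp.inner_apply, Fintype.sum_prod_type, Fin.sum_univ_two, hφ, mul_comm]

/-- Holds for every `y` and `z`: when one of them is nonpositive both sides are `0`. -/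
theorem Real.sqrt_div_mul_sqrt_div {a : ℝ} (ha : 0 ≤ a) (y z : ℝ) :
    √(a / y) * √(a / z) = a / (√y * √z) := by
  rw [Real.sqrt_div ha, Real.sqrt_div ha, div_mul_div_comm, Real.mul_self_sqrt ha]

theorem Real.sum_sqrt_div_mul_sqrt_div_sum {ι : Type*} (s : Finset ι) {w : ι → ℝ}
    (hw : ∀ i ∈ s, 0 ≤ w i) (z : ℝ) :
    ∑ i ∈ s, √(w i / z) * √(w i / ∑ j ∈ s, w j) = √((∑ j ∈ s, w j) / z) := by
  have hsum : 0 ≤ ∑ j ∈ s, w j := Finset.sum_nonneg hw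
  rw [Finset.sum_congr rfl fun i hi => Real.sqrt_div_mul_sqrt_div (hw i hi) _ _,
    ← Finset.sum_div, mul_comm, ← div_div, Real.div_sqrt, Real.sqrt_div hsum]

theorem inner_psi_phi_general (N : ℕ)
    (w : Fin N → ℝ) (hw : ∀ i, 0 ≤ w i)
    (W Z : ℝ) (hW : W = ∑ i, w i)
    (ψ φ : EuclideanSpace ℝ (Fin N × Fin 2))
    (hψ0 : ∀ i, ψ (i, 0) = Real.sqrt (w i / Z))
    (hφ0 : ∀ i, φ (i, 0) = Real.sqrt (w i / W))
    (hφ1 : ∀ i, φ (i, 1) = 0) :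
    ⟪ψ, φ⟫ = Real.sqrt (W / Z) := by
  simp only [EuclideanSpace.inner_eq_sum_of_apply_one_eq_zero ψ φ hφ1, hψ0, hφ0, hW]
  exact Real.sum_sqrt_div_mul_sqrt_div_sum _ (fun i _ => hw i) Z

/-- The inner product of the state `ψ` produced by the circuit `𝒞` with the target state
`φ = |w⟩ ⊗ e₀` equals `√(W/Z)`. -/
theorem inner_psi_phi (N K : ℕ) (hN : 1 ≤ N) (hK : 1 ≤ K) (hKN : K ≤ N)
    (w : Fin N → ℝ) (hw : ∀ i, 0 ≤ w i) (hw0 : w ≠ 0)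
    (H : Finset (Fin N)) (hHne : H.Nonempty) (hHcard : H.card = K)
    (htop : ∀ i ∈ H, ∀ j ∉ H, w j ≤ w i)
    (W m Z : ℝ) (hW : W = ∑ i, w i) (hm : m = H.inf' hHne w)
    (hZ : Z = ((N : ℝ) - K) * m + ∑ i ∈ H, w i)
    (ψ φ : EuclideanSpace ℝ (Fin N × Fin 2))
    (hψ0 : ∀ i, ψ (i, 0) = Real.sqrt (w i / Z))
    (hψ1 : ∀ i, ψ (i, 1) = if i ∈ H then 0 else Real.sqrt ((m - w i) / Z))
    (hφ0 : ∀ i, φ (i, 0) = Real.sqrt (w i / W))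
    (hφ1 : ∀ i, φ (i, 1) = 0) :
    ⟪ψ, φ⟫ = Real.sqrt (W / Z) :=
  inner_psi_phi_general N w hw W Z hW ψ φ hψ0 hφ0 hφ1
end

section
/- Let K ≥ 1 be an integer and let X_1, …, X_{4K} be independent random variables, each uniformly distributed on a finite set S of size 2K. Then the probability that the number of distinct values among X_1, …, X_{4K} is less than K is at most 2·e^{−2} (in particular strictly less than 1/2). -/
/-!
If fewer than `K` values appear among the samples, they all lie in some `K`-subset of `S`.
By independence and uniformity, a fixed `K`-subset of a `2K`-set contains all `4K` samples
with probability `2⁻⁴ᴷ`, so the union bound over the `(2K choose K) ≤ 4ᴷ` subsets gives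
`4⁻ᴷ ≤ 1/4`.
-/

open MeasureTheory ProbabilityTheory Finset
open scoped ENNReal

section CouponCollector

variable {Ω S ι : Type*} [MeasurableSpace Ω] [Fintype S] [Fintype ι]

lemma measure_card_image_lt_le_sum_powersetCard [DecidableEq S] (μ : Measure Ω) (X : ι → Ω → S)
    {K : ℕ} (hK : K ≤ Fintype.card S) :
    μ {ω | #(univ.image fun i => X i ω) < K} ≤
      ∑ T ∈ powersetCard K univ, μ {ω | ∀ i, X i ω ∈ T} := by
  refine (measure_mono ?_).trans (measure_biUnion_finset_le _ _)
  intro ω hω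
  obtain ⟨T, hrange, hT⟩ := exists_superset_card_eq (le_of_lt hω) hK
  exact Set.mem_biUnion (mem_powersetCard_univ.mpr hT)
    fun i => hrange (mem_image_of_mem _ (mem_univ i))

lemma measure_forall_mem_of_iIndepFun_uniform [Nonempty S] [MeasurableSpace S]
    [MeasurableSingletonClass S] {μ : Measure Ω} {X : ι → Ω → S}
    (hmeas : ∀ i, Measurable (X i)) (hindep : iIndepFun X μ)
    (hunif : ∀ i, μ.map (X i) = (PMF.uniformOfFintype S).toMeasure) (T : Finset S) :
    μ {ω | ∀ i, X i ω ∈ T} = (#T / Fintype.card S : ℝ≥0∞) ^ Fintype.card ι := by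
  have hT : MeasurableSet (T : Set S) := T.measurableSet
  have hpreimage : ∀ i, μ (X i ⁻¹' T) = #T / Fintype.card S := fun i => by
    rw [← Measure.map_apply (hmeas i) hT, hunif i, PMF.toMeasure_uniformOfFintype_apply _ hT]
    simp
  have hinter : {ω | ∀ i, X i ω ∈ T} = ⋂ i, X i ⁻¹' T := by ext; simp
  rw [hinter, hindep.meas_iInter fun i => ⟨T, hT, rfl⟩]
  simp [hpreimage]

lemma measure_card_image_lt_le_of_iIndepFun_uniform [DecidableEq S] [Nonempty S]
    [MeasurableSpace S] [MeasurableSingletonClass S] {μ : Measure Ω} {X : ι → Ω → S}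
    (hmeas : ∀ i, Measurable (X i)) (hindep : iIndepFun X μ)
    (hunif : ∀ i, μ.map (X i) = (PMF.uniformOfFintype S).toMeasure) {K : ℕ}
    (hK : K ≤ Fintype.card S) :
    μ {ω | #(univ.image fun i => X i ω) < K} ≤
      (Fintype.card S).choose K * (K / Fintype.card S : ℝ≥0∞) ^ Fintype.card ι := by
  calc μ {ω | #(univ.image fun i => X i ω) < K}
      ≤ ∑ T ∈ powersetCard K univ, μ {ω | ∀ i, X i ω ∈ T} :=
        measure_card_image_lt_le_sum_powersetCard μ X hK
    _ = ∑ _T ∈ powersetCard K (univ : Finset S),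
          (K / Fintype.card S : ℝ≥0∞) ^ Fintype.card ι :=
        sum_congr rfl fun T hT => by
          rw [measure_forall_mem_of_iIndepFun_uniform hmeas hindep hunif,
            (mem_powersetCard_univ.mp hT)]
    _ = _ := by rw [sum_const, card_powersetCard, card_univ, nsmul_eq_mul]

end CouponCollector

lemma choose_two_mul_mul_inv_two_pow_four_mul_le {K : ℕ} (hK : 1 ≤ K) :
    ((2 * K).choose K : ℝ≥0∞) * 2⁻¹ ^ (4 * K) ≤ 4⁻¹ := by
  have hchoose : ((2 * K).choose K : ℝ≥0∞) ≤ 2 ^ (2 * K) := by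
    exact_mod_cast Nat.choose_le_two_pow (2 * K) K
  calc ((2 * K).choose K : ℝ≥0∞) * 2⁻¹ ^ (4 * K)
      ≤ 2 ^ (2 * K) * 2⁻¹ ^ (4 * K) := by gcongr
    _ = 4⁻¹ ^ K := by
        rw [show 4 * K = 2 * K + 2 * K by ring, pow_add, ← mul_assoc, ← mul_pow,
          ENNReal.mul_inv_cancel two_ne_zero ENNReal.ofNat_ne_top, one_pow, one_mul, pow_mul,
          ← ENNReal.inv_pow]
        norm_num
    _ ≤ 4⁻¹ := pow_le_of_le_one zero_le (by norm_num) (by omega)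

lemma inv_four_le_two_mul_exp_neg_two : (4 : ℝ)⁻¹ ≤ 2 * Real.exp (-2) := by
  have hexp : Real.exp 2 ≤ 8 := by
    rw [show (2 : ℝ) = 1 + 1 by norm_num, Real.exp_add]
    nlinarith [Real.exp_one_lt_d9, Real.exp_pos 1]
  rw [Real.exp_neg, ← div_eq_mul_inv, le_div_iff₀ (Real.exp_pos 2)]
  linarith

theorem coupon_collector_bound_general
    {Ω : Type*} [MeasurableSpace Ω] (μ : Measure Ω)
    {S : Type*} [Fintype S] [Nonempty S] [DecidableEq S]
    [MeasurableSpace S] [MeasurableSingletonClass S]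
    (K : ℕ) (hK : 1 ≤ K) (hcard : Fintype.card S = 2 * K)
    (X : Fin (4 * K) → Ω → S) (hmeas : ∀ t, Measurable (X t))
    (hindep : iIndepFun X μ)
    (hunif : ∀ t, Measure.map (X t) μ = (PMF.uniformOfFintype S).toMeasure) :
    μ {ω | (Finset.image (fun t => X t ω) Finset.univ).card < K}
        ≤ ENNReal.ofReal (2 * Real.exp (-2)) ∧
      μ {ω | (Finset.image (fun t => X t ω) Finset.univ).card < K} < 1 / 2 := by
  have hhalf : (K / (2 * K) : ℝ≥0∞) = 2⁻¹ := by
    have hK0 : (K : ℝ≥0∞) ≠ 0 := by exact_mod_cast (by omega : K ≠ 0)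
    rw [ENNReal.div_eq_inv_mul, ENNReal.mul_inv (by simp) (by simp), mul_assoc,
      ENNReal.inv_mul_cancel hK0 (by simp), mul_one]
  have hquarter : μ {ω | #(univ.image fun t => X t ω) < K} ≤ 4⁻¹ := by
    have h := measure_card_image_lt_le_of_iIndepFun_uniform hmeas hindep hunif (K := K)
      (by omega)
    rw [hcard, Fintype.card_fin, Nat.cast_mul, Nat.cast_ofNat, hhalf] at h
    exact h.trans (choose_two_mul_mul_inv_two_pow_four_mul_le hK)
  refine ⟨hquarter.trans ?_, hquarter.trans_lt ?_⟩
  · rw [← ENNReal.ofReal_ofNat 4, ← ENNReal.ofReal_inv_of_pos (by norm_num)]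
    exact ENNReal.ofReal_le_ofReal inv_four_le_two_mul_exp_neg_two
  · rw [one_div]
    exact ENNReal.inv_lt_inv.mpr (by norm_num)

/-- Coupon-collector bound: if `X 1, …, X (4K)` are i.i.d. uniform on a finite set `S` of
size `2K`, then the probability that fewer than `K` distinct values appear is at most
`2·e⁻²`, which is in particular strictly less than `1/2`. -/
theorem coupon_collector_bound
    {Ω : Type*} [MeasurableSpace Ω] (μ : Measure Ω) [IsProbabilityMeasure μ]
    {S : Type*} [Fintype S] [Nonempty S] [DecidableEq S]
    [MeasurableSpace S] [MeasurableSingletonClass S]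
    (K : ℕ) (hK : 1 ≤ K) (hcard : Fintype.card S = 2 * K)
    (X : Fin (4 * K) → Ω → S) (hmeas : ∀ t, Measurable (X t))
    (hindep : iIndepFun X μ)
    (hunif : ∀ t, Measure.map (X t) μ = (PMF.uniformOfFintype S).toMeasure) :
    μ {ω | (Finset.image (fun t => X t ω) Finset.univ).card < K}
        ≤ ENNReal.ofReal (2 * Real.exp (-2)) ∧
      μ {ω | (Finset.image (fun t => X t ω) Finset.univ).card < K} < 1 / 2 :=
  coupon_collector_bound_general μ K hK hcard X hmeas hindep hunif
end
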